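/- arXiv:1506.07303 — 3 statements merged into one kernel-verified Lean document; each statement's English description precedes it below -/
import Mathlib

section
/- For every ordering ξ of the Pascal graph and every vertex (x,y) with x+y ≥ 1, the basic block B_ξ(x,y) does not contain both (ab)^9 and (ba)^9 as subblocks. -/
/-- Vertex reached after `n` moves: (number of `false` moves, number of `true` moves). -/
def vertexAt (γ : ℕ → Bool) (n : ℕ) : ℕ × ℕ :=
  (((Finset.range n).filter fun i => γ i = false).card,
   ((Finset.range n).filter fun i => γ i = true).card)

def childOf (v : ℕ × ℕ) (m : Bool) : ℕ × ℕ :=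
  if m then (v.1, v.2 + 1) else (v.1 + 1, v.2)

def MoveMin (ξ : ℕ × ℕ → Bool) (v : ℕ × ℕ) (m : Bool) : Prop :=
  (childOf v m).1 = 0 ∨ (childOf v m).2 = 0 ∨ m = !ξ (childOf v m)

def MoveMax (ξ : ℕ × ℕ → Bool) (v : ℕ × ℕ) (m : Bool) : Prop :=
  (childOf v m).1 = 0 ∨ (childOf v m).2 = 0 ∨ m = ξ (childOf v m)

def IsMinEdge (ξ : ℕ × ℕ → Bool) (γ : ℕ → Bool) (i : ℕ) : Prop :=
  MoveMin ξ (vertexAt γ i) (γ i)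

def IsMaxEdge (ξ : ℕ × ℕ → Bool) (γ : ℕ → Bool) (i : ℕ) : Prop :=
  MoveMax ξ (vertexAt γ i) (γ i)

def XMin (ξ : ℕ × ℕ → Bool) : Set (ℕ → Bool) := {γ | ∀ i, IsMinEdge ξ γ i}

def XMax (ξ : ℕ × ℕ → Bool) : Set (ℕ → Bool) := {γ | ∀ i, IsMaxEdge ξ γ i}

def XPrime (ξ : ℕ × ℕ → Bool) : Set (ℕ → Bool) :=
  {γ | ∃ δ ∈ XMin ξ ∪ XMax ξ, ∃ N : ℕ, ∀ n, N ≤ n → γ n = δ n}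

/-- The all-ξ-minimal finite path (list of moves) from the root to a vertex. -/
def minPath (ξ : ℕ × ℕ → Bool) : ℕ × ℕ → List Bool
  | (0, 0) => []
  | (x + 1, 0) => minPath ξ (x, 0) ++ [false]
  | (0, y + 1) => minPath ξ (0, y) ++ [true]
  | (x + 1, y + 1) =>
      if ξ (x + 1, y + 1) then minPath ξ (x, y + 1) ++ [false]
      else minPath ξ (x + 1, y) ++ [true]
  termination_by p => p.1 + p.2

/-- The all-ξ-maximal finite path (list of moves) from the root to a vertex. -/
def maxPath (ξ : ℕ × ℕ → Bool) : ℕ × ℕ → List Bool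
  | (0, 0) => []
  | (x + 1, 0) => maxPath ξ (x, 0) ++ [false]
  | (0, y + 1) => maxPath ξ (0, y) ++ [true]
  | (x + 1, y + 1) =>
      if ξ (x + 1, y + 1) then maxPath ξ (x + 1, y) ++ [true]
      else maxPath ξ (x, y + 1) ++ [false]
  termination_by p => p.1 + p.2

open Classical in
/-- The adic (Vershik) transformation determined by ξ (identity where undefined). -/
noncomputable def adicT (ξ : ℕ × ℕ → Bool) (γ : ℕ → Bool) : ℕ → Bool :=
  if h : ∃ i, ¬ IsMaxEdge ξ γ i then
    let i0 := Nat.find h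
    let v := vertexAt γ (i0 + 1)
    let src : ℕ × ℕ := if ξ v then (v.1, v.2 - 1) else (v.1 - 1, v.2)
    fun n =>
      if n < i0 then (minPath ξ src).getD n false
      else if n = i0 then ξ v
      else γ n
  else γ

open Classical in
/-- The inverse adic transformation determined by ξ (identity where undefined). -/
noncomputable def adicTInv (ξ : ℕ × ℕ → Bool) (γ : ℕ → Bool) : ℕ → Bool :=
  if h : ∃ i, ¬ IsMinEdge ξ γ i then
    let i0 := Nat.find h
    let v := vertexAt γ (i0 + 1)
    let src : ℕ × ℕ := if ξ v then (v.1 - 1, v.2) else (v.1, v.2 - 1)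
    fun n =>
      if n < i0 then (maxPath ξ src).getD n false
      else if n = i0 then !ξ v
      else γ n
  else γ

/-- ℤ-iterates of the adic transformation. -/
noncomputable def adicIter (ξ : ℕ × ℕ → Bool) : ℤ → (ℕ → Bool) → (ℕ → Bool)
  | Int.ofNat n, γ => (adicT ξ)^[n] γ
  | Int.negSucc n, γ => (adicTInv ξ)^[n + 1] γ

/-- The k-coding of the orbit of γ: symbols are the initial segments of length k. -/
noncomputable def omegaCode (ξ : ℕ × ℕ → Bool) (k : ℕ) (γ : ℕ → Bool) : ℤ → List Bool :=
  fun t => (List.range k).map (adicIter ξ t γ)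

/-- Ordered list of all initial segments from the root to (x,y), in increasing ξ-order. -/
def segList (ξ : ℕ × ℕ → Bool) : ℕ × ℕ → List (List Bool)
  | (0, 0) => [[]]
  | (x + 1, 0) => (segList ξ (x, 0)).map (· ++ [false])
  | (0, y + 1) => (segList ξ (0, y)).map (· ++ [true])
  | (x + 1, y + 1) =>
      if ξ (x + 1, y + 1) then
        (segList ξ (x, y + 1)).map (· ++ [false]) ++ (segList ξ (x + 1, y)).map (· ++ [true])
      else
        (segList ξ (x + 1, y)).map (· ++ [true]) ++ (segList ξ (x, y + 1)).map (· ++ [false])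
  termination_by p => p.1 + p.2

/-- Level-k coded basic block at a vertex (x,y) with x+y ≥ k, a word over the
alphabet of initial segments of length k. -/
def codedBlock (ξ : ℕ × ℕ → Bool) (k : ℕ) : ℕ × ℕ → List (List Bool)
  | (0, 0) => segList ξ (0, 0)
  | (x + 1, 0) => if x + 1 ≤ k then segList ξ (x + 1, 0) else [List.replicate k false]
  | (0, y + 1) => if y + 1 ≤ k then segList ξ (0, y + 1) else [List.replicate k true]
  | (x + 1, y + 1) =>
      if x + 1 + (y + 1) ≤ k then segList ξ (x + 1, y + 1)
      else if ξ (x + 1, y + 1) then codedBlock ξ k (x, y + 1) ++ codedBlock ξ k (x + 1, y)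
      else codedBlock ξ k (x + 1, y) ++ codedBlock ξ k (x, y + 1)
  termination_by p => p.1 + p.2

/-- Basic block over the alphabet {a,b}, with a = `false` and b = `true`. -/
def basicBlock (ξ : ℕ × ℕ → Bool) : ℕ × ℕ → List Bool
  | (0, 0) => []
  | (_ + 1, 0) => [false]
  | (0, _ + 1) => [true]
  | (x + 1, y + 1) =>
      if ξ (x + 1, y + 1) then basicBlock ξ (x, y + 1) ++ basicBlock ξ (x + 1, y)
      else basicBlock ξ (x + 1, y) ++ basicBlock ξ (x, y + 1)
  termination_by p => p.1 + p.2

/-- The finite word ω_s ω_{s+1} ... ω_{t-1}. -/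
def wordAt (ω : ℤ → List Bool) (s t : ℤ) : List (List Bool) :=
  (List.range (t - s).toNat).map fun u => ω (s + u)

/-- A ξ-consistent factoring scheme for ω ∈ 𝒫_k^ℤ: `cuts j` is the set of starting
positions of the blocks of the level-(k+j) factorization, and `vert j s` is the
vertex whose coded basic block is the block starting at the cut `s`. -/
def IsConsistentScheme (ξ : ℕ × ℕ → Bool) (k : ℕ) (ω : ℤ → List Bool)
    (cuts : ℕ → Set ℤ) (vert : ℕ → ℤ → ℕ × ℕ) : Prop :=
  (∀ j : ℕ, ∀ M : ℤ, ∃ s ∈ cuts j, s < M) ∧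
  (∀ j : ℕ, ∀ M : ℤ, ∃ t ∈ cuts j, M < t) ∧
  (∀ j : ℕ, ∀ s ∈ cuts j, ∀ t ∈ cuts j, s < t → (∀ u ∈ cuts j, ¬(s < u ∧ u < t)) →
      (vert j s).1 + (vert j s).2 = k + j ∧
      wordAt ω s t = codedBlock ξ k (vert j s)) ∧
  (∀ j : ℕ, cuts (j + 1) ⊆ cuts j) ∧
  (∀ j : ℕ, ∀ s ∈ cuts (j + 1), ∀ t ∈ cuts (j + 1), s < t →
      (∀ u ∈ cuts (j + 1), ¬(s < u ∧ u < t)) →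
      ∀ x y : ℕ, vert (j + 1) s = (x + 1, y + 1) →
        ∃ m ∈ cuts j, s < m ∧ m < t ∧ (∀ u ∈ cuts j, s < u → u < t → u = m) ∧
          (if ξ (x + 1, y + 1)
            then vert j s = (x, y + 1) ∧ vert j m = (x + 1, y)
            else vert j s = (x + 1, y) ∧ vert j m = (x, y + 1)))

/-- The natural factoring scheme of the k-coding of γ: a level-(k+j) block begins at
coordinate t exactly when T^t γ begins with an all-ξ-minimal path to its level-(k+j) vertex. -/
noncomputable def natCuts (ξ : ℕ × ℕ → Bool) (k : ℕ) (γ : ℕ → Bool) : ℕ → Set ℤ :=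
  fun j => {t | ∀ i < k + j, IsMinEdge ξ (adicIter ξ t γ) i}

noncomputable def natVert (ξ : ℕ × ℕ → Bool) (k : ℕ) (γ : ℕ → Bool) : ℕ → ℤ → ℕ × ℕ :=
  fun j t => vertexAt (adicIter ξ t γ) (k + j)

open Classical in
/-- The return time r_n of the Kink Lemma, where `g` is the move of γ leaving (i,j). -/
noncomputable def kinkReturn (ξ : ℕ × ℕ → Bool) (i j : ℕ) (g : Bool) : ℕ :=
  let n := i + j
  if MoveMax ξ (i, j) g ∧ MoveMin ξ (i, j) (!g) then n.choose j
  else if (MoveMin ξ (i, j) g ∧ MoveMin ξ (i, j) (!g) ∧ g = true) ∨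
          (MoveMax ξ (i, j) g ∧ MoveMax ξ (i, j) (!g) ∧ g = false) then (n + 1).choose (j + 1)
  else if (MoveMin ξ (i, j) g ∧ MoveMin ξ (i, j) (!g) ∧ g = false) ∨
          (MoveMax ξ (i, j) g ∧ MoveMax ξ (i, j) (!g) ∧ g = true) then (n + 1).choose j
  else (n + 1).choose j + n.choose (j + 1)

/-- Convert a length-k list of moves to a function `Fin k → Bool`. -/
def segFn (k : ℕ) (w : List Bool) : Fin k → Bool := fun idx => w.getD idx false

/-- The subshift Σ_k of the k-codings: sequences all of whose finite subblocks occur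
in some level-k coded basic block. -/
def SigmaK (ξ : ℕ × ℕ → Bool) (k : ℕ) : Set (ℤ → (Fin k → Bool)) :=
  {ω | ∀ (s : ℤ) (l : ℕ), ∃ p : ℕ × ℕ,
    ((List.range l).map fun u => ω (s + u)) <:+: (codedBlock ξ k p).map (segFn k)}

/-- The subshift Σ_ξ ⊆ {a,b}^ℤ of sequences all of whose finite subblocks occur in
some basic block B_ξ(x,y). -/
def SigmaXi (ξ : ℕ × ℕ → Bool) : Set (ℤ → Bool) :=
  {ω | ∀ (s : ℤ) (l : ℕ), ∃ p : ℕ × ℕ,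
    ((List.range l).map fun u => ω (s + u)) <:+: basicBlock ξ p}

/-- The big subshift Σ: sequences all of whose finite subblocks occur in some basic
block B_ξ(x,y) for some ordering ξ. -/
def BigShift : Set (ℤ → Bool) :=
  {ω | ∀ (s : ℤ) (l : ℕ), ∃ (ξ : ℕ × ℕ → Bool) (p : ℕ × ℕ),
    ((List.range l).map fun u => ω (s + u)) <:+: basicBlock ξ p}

namespace S14

abbrev bb (ξ : ℕ × ℕ → Bool) (x y : ℕ) : List Bool := basicBlock ξ (x, y)

def babaW : List Bool := [true, false, true, false]
def p10W : List Bool := [false, true, false, true, false, true, false, true, false, true]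
def p18W : List Bool := [false, true, false, true, false, true, false, true, false, true,
  false, true, false, true, false, true, false, true]

/-! ### basic unfolding lemmas -/

lemma bb_x0 (ξ) (x : ℕ) (hx : 1 ≤ x) : bb ξ x 0 = [false] := by
  cases x with
  | zero => omega
  | succ a => show basicBlock ξ (a+1, 0) = [false]; simp only [basicBlock]

lemma bb_0y (ξ) (y : ℕ) (hy : 1 ≤ y) : bb ξ 0 y = [true] := by
  cases y with
  | zero => omega
  | succ a => show basicBlock ξ (0, a+1) = [true]; simp only [basicBlock]

lemma bb_step (ξ) (x y : ℕ) (hx : 1 ≤ x) (hy : 1 ≤ y) :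
    bb ξ x y = if ξ (x, y) then bb ξ (x-1) y ++ bb ξ x (y-1)
               else bb ξ x (y-1) ++ bb ξ (x-1) y := by
  cases x with
  | zero => omega
  | succ a =>
    cases y with
    | zero => omega
    | succ b =>
      show basicBlock ξ (a+1, b+1) = _
      simp only [basicBlock, Nat.add_sub_cancel]

/-! ### count and length lemmas -/

lemma count_bb (ξ) (x y : ℕ) (hx : 1 ≤ x) (hy : 1 ≤ y) (c : Bool) :
    (bb ξ x y).count c = (bb ξ x (y-1)).count c + (bb ξ (x-1) y).count c := by
  rw [bb_step ξ x y hx hy]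
  cases ξ (x, y) <;> simp [List.count_append] <;> omega

lemma cf_row (ξ) : ∀ x, (bb ξ x 1).count false = x := by
  intro x
  induction x with
  | zero => rw [bb_0y ξ 1 (by omega)]; rfl
  | succ a ih =>
    rw [count_bb ξ (a+1) 1 (by omega) (by omega)]
    rw [bb_x0 ξ (a+1) (by omega)]
    simp only [Nat.add_sub_cancel, ih]
    have e : List.count false [false] = 1 := by decide
    omega

lemma ct_row (ξ) : ∀ x, (bb ξ x 1).count true = 1 := by
  intro x
  induction x with
  | zero => rw [bb_0y ξ 1 (by omega)]; rfl
  | succ a ih =>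
    rw [count_bb ξ (a+1) 1 (by omega) (by omega)]
    rw [bb_x0 ξ (a+1) (by omega)]
    simp only [Nat.add_sub_cancel, ih]
    have e : List.count true [false] = 0 := by decide
    omega

lemma cf_col (ξ) : ∀ y, (bb ξ 1 y).count false = 1 := by
  intro y
  induction y with
  | zero => rw [bb_x0 ξ 1 (by omega)]; rfl
  | succ a ih =>
    rw [count_bb ξ 1 (a+1) (by omega) (by omega)]
    rw [bb_0y ξ (a+1) (by omega)]
    simp only [Nat.add_sub_cancel, ih]
    have e : List.count false [true] = 0 := by decide
    omega

lemma ct_col (ξ) : ∀ y, (bb ξ 1 y).count true = y := by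
  intro y
  induction y with
  | zero => rw [bb_x0 ξ 1 (by omega)]; rfl
  | succ a ih =>
    rw [count_bb ξ 1 (a+1) (by omega) (by omega)]
    rw [bb_0y ξ (a+1) (by omega)]
    simp only [Nat.add_sub_cancel, ih]
    have e : List.count true [true] = 1 := by decide
    omega

lemma cf_ge (ξ) (x : ℕ) : ∀ y, 1 ≤ y → x ≤ (bb ξ x y).count false := by
  intro y
  induction y with
  | zero => omega
  | succ b ih =>
    intro _
    rcases Nat.eq_zero_or_pos x with hx | hx
    · omega
    rcases Nat.eq_zero_or_pos b with hb | hb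
    · subst hb; rw [cf_row ξ x]
    · rw [count_bb ξ x (b+1) hx (by omega)]
      have := ih hb
      simp only [Nat.add_sub_cancel]
      omega

lemma ct_ge (ξ) (y : ℕ) : ∀ x, 1 ≤ x → y ≤ (bb ξ x y).count true := by
  intro x
  induction x with
  | zero => omega
  | succ a ih =>
    intro _
    rcases Nat.eq_zero_or_pos y with hy | hy
    · omega
    rcases Nat.eq_zero_or_pos a with ha | ha
    · subst ha; rw [ct_col ξ y]
    · rw [count_bb ξ (a+1) y (by omega) hy]
      have := ih ha
      simp only [Nat.add_sub_cancel]
      omega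

lemma len_bb (ξ) (x y : ℕ) (hx : 1 ≤ x) (hy : 1 ≤ y) :
    (bb ξ x y).length = (bb ξ x (y-1)).length + (bb ξ (x-1) y).length := by
  rw [bb_step ξ x y hx hy]
  cases ξ (x, y) <;> simp [List.length_append] <;> omega

lemma len_row (ξ) : ∀ x, (bb ξ x 1).length = x + 1 := by
  intro x
  induction x with
  | zero => rw [bb_0y ξ 1 (by omega)]; rfl
  | succ a ih =>
    rw [len_bb ξ (a+1) 1 (by omega) (by omega), bb_x0 ξ (a+1) (by omega)]
    simp only [Nat.add_sub_cancel, ih]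
    simp
    try omega

lemma len_col (ξ) : ∀ y, (bb ξ 1 y).length = y + 1 := by
  intro y
  induction y with
  | zero => rw [bb_x0 ξ 1 (by omega)]; rfl
  | succ a ih =>
    rw [len_bb ξ 1 (a+1) (by omega) (by omega), bb_0y ξ (a+1) (by omega)]
    simp only [Nat.add_sub_cancel, ih]
    simp
    try omega

/-! ### alternating words -/

def isAlt : List Bool → Bool
  | [] => true
  | [_] => true
  | a :: b :: t => (a != b) && isAlt (b :: t)

lemma isAlt_cons {a : Bool} {l : List Bool} (h : isAlt (a :: l) = true) : isAlt l = true := by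
  cases l with
  | nil => rfl
  | cons b t =>
    rw [isAlt, Bool.and_eq_true] at h
    exact h.2

lemma isAlt_append_left : ∀ u v : List Bool, isAlt (u ++ v) = true → isAlt u = true
  | [], _, _ => rfl
  | [a], _, _ => rfl
  | a :: b :: t, v, h => by
    rw [isAlt, Bool.and_eq_true]
    simp only [List.cons_append] at h
    rw [isAlt, Bool.and_eq_true] at h
    exact ⟨h.1, isAlt_append_left (b :: t) v h.2⟩

lemma isAlt_append_right : ∀ u v : List Bool, isAlt (u ++ v) = true → isAlt v = true
  | [], _, h => h
  | a :: u, v, h => by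
    simp only [List.cons_append] at h
    exact isAlt_append_right u v (isAlt_cons h)

lemma isAlt_prefix {u w : List Bool} (h : u <+: w) (hw : isAlt w = true) : isAlt u = true := by
  obtain ⟨r, hr⟩ := h
  exact isAlt_append_left u r (hr ▸ hw)

lemma alt_count_true : ∀ l : List Bool, isAlt l = true → l.length ≤ 2 * l.count true + 1
  | [], _ => by simp
  | [a], _ => by cases a <;> simp
  | a :: b :: t, h => by
    rw [isAlt, Bool.and_eq_true, bne_iff_ne] at h
    have h2 : isAlt t = true := isAlt_cons h.2
    have IH := alt_count_true t h2
    have hcount : (a :: b :: t).count true = t.count true + 1 := by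
      have hne := h.1
      cases a <;> cases b <;> simp_all [List.count_cons]
    have hl : (a :: b :: t).length = t.length + 2 := by simp
    omega

lemma alt_count_false : ∀ l : List Bool, isAlt l = true → l.length ≤ 2 * l.count false + 1
  | [], _ => by simp
  | [a], _ => by cases a <;> simp
  | a :: b :: t, h => by
    rw [isAlt, Bool.and_eq_true, bne_iff_ne] at h
    have h2 : isAlt t = true := isAlt_cons h.2
    have IH := alt_count_false t h2
    have hcount : (a :: b :: t).count false = t.count false + 1 := by
      have hne := h.1
      cases a <;> cases b <;> simp_all [List.count_cons]
    have hl : (a :: b :: t).length = t.length + 2 := by simp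
    omega

lemma notAlt_x (ξ) : ∀ n x y, x + y = n → 3 ≤ x → 1 ≤ y → isAlt (bb ξ x y) = true → False := by
  intro n
  induction n using Nat.strong_induction_on with
  | _ n IH =>
  intro x y hs hx hy hAlt
  have hparts : isAlt (bb ξ x (y-1)) = true ∧ isAlt (bb ξ (x-1) y) = true := by
    rw [bb_step ξ x y (by omega) (by omega)] at hAlt
    cases hxi : ξ (x, y)
    · rw [hxi, if_neg (by simp)] at hAlt
      exact ⟨isAlt_append_left _ _ hAlt, isAlt_append_right _ _ hAlt⟩
    · rw [hxi, if_pos rfl] at hAlt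
      exact ⟨isAlt_append_right _ _ hAlt, isAlt_append_left _ _ hAlt⟩
  rcases (show 2 ≤ y ∨ y = 1 by omega) with h2 | h1
  · exact IH (x + (y-1)) (by omega) x (y-1) rfl hx (by omega) hparts.1
  · subst h1
    rcases (show 4 ≤ x ∨ x = 3 by omega) with h4 | h3
    · exact IH ((x-1) + 1) (by omega) (x-1) 1 rfl (by omega) (by omega) hparts.2
    · subst h3
      have hlen := len_row ξ 3
      have hct := ct_row ξ 3
      have := alt_count_true _ hAlt
      omega

lemma notAlt_y (ξ) : ∀ n x y, x + y = n → 1 ≤ x → 3 ≤ y → isAlt (bb ξ x y) = true → False := by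
  intro n
  induction n using Nat.strong_induction_on with
  | _ n IH =>
  intro x y hs hx hy hAlt
  have hparts : isAlt (bb ξ x (y-1)) = true ∧ isAlt (bb ξ (x-1) y) = true := by
    rw [bb_step ξ x y (by omega) (by omega)] at hAlt
    cases hxi : ξ (x, y)
    · rw [hxi, if_neg (by simp)] at hAlt
      exact ⟨isAlt_append_left _ _ hAlt, isAlt_append_right _ _ hAlt⟩
    · rw [hxi, if_pos rfl] at hAlt
      exact ⟨isAlt_append_right _ _ hAlt, isAlt_append_left _ _ hAlt⟩
  rcases (show 2 ≤ x ∨ x = 1 by omega) with h2 | h1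
  · exact IH ((x-1) + y) (by omega) (x-1) y rfl (by omega) hy hparts.2
  · subst h1
    rcases (show 4 ≤ y ∨ y = 3 by omega) with h4 | h3
    · exact IH (1 + (y-1)) (by omega) 1 (y-1) rfl (by omega) (by omega) hparts.1
    · subst h3
      have hlen := len_col ξ 3
      have hcf := cf_col ξ 3
      have := alt_count_false _ hAlt
      omega

/-! ### splitting lemmas -/

lemma suffix_of_suffix_length_le {l₁ l₂ l₃ : List Bool} (h1 : l₁ <:+ l₃) (h2 : l₂ <:+ l₃)
    (h : l₁.length ≤ l₂.length) : l₁ <:+ l₂ := by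
  rw [← List.reverse_prefix] at h1 h2 ⊢
  exact List.prefix_of_prefix_length_le h1 h2 (by simpa using h)

lemma prefix_split (t u v : List Bool) (h : t <+: u ++ v) :
    t <+: u ∨ ∃ t', t = u ++ t' ∧ t' <+: v := by
  by_cases hl : t.length ≤ u.length
  · exact Or.inl (List.prefix_of_prefix_length_le h (List.prefix_append u v) hl)
  · obtain ⟨t', rfl⟩ := List.prefix_of_prefix_length_le (List.prefix_append u v) h (by omega)
    refine Or.inr ⟨t', rfl, ?_⟩
    obtain ⟨r, hr⟩ := h
    rw [List.append_assoc] at hr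
    exact ⟨r, List.append_cancel_left hr⟩

lemma infix_split (t u v : List Bool) (h : t <:+: u ++ v) :
    t <:+: u ∨ t <:+: v ∨ ∃ s p, s ++ p = t ∧ s ≠ [] ∧ p ≠ [] ∧ s <:+ u ∧ p <+: v := by
  obtain ⟨l, r, hl⟩ := h
  have h1 : l ++ t <+: u ++ v := ⟨r, hl⟩
  rcases prefix_split (l ++ t) u v h1 with h2 | ⟨t', ht', hpv⟩
  · obtain ⟨r', hr'⟩ := h2
    exact Or.inl ⟨l, r', hr'⟩
  · by_cases hc : t'.length ≤ t.length
    · have hsuf : t' <:+ t := suffix_of_suffix_length_le ⟨u, ht'.symm⟩ (List.suffix_append l t) hc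
      obtain ⟨s, hs⟩ := hsuf
      by_cases hse : s = []
      · subst hse
        simp only [List.nil_append] at hs
        subst hs
        exact Or.inr (Or.inl hpv.isInfix)
      · by_cases hte : t' = []
        · subst hte
          simp only [List.append_nil] at ht'
          exact Or.inl ⟨l, [], by simp [ht'.symm]⟩
        · refine Or.inr (Or.inr ⟨s, t', hs, hse, hte, ?_, hpv⟩)
          have h3 : (l ++ s) ++ t' = u ++ t' := by rw [List.append_assoc, hs, ht']
          exact ⟨l, List.append_cancel_right h3⟩
    · have h3 : t <:+ t' := suffix_of_suffix_length_le (List.suffix_append l t) ⟨u, ht'.symm⟩ (by omega)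
      exact Or.inr (Or.inl (h3.isInfix.trans hpv.isInfix))

lemma suffix_baba_count (t : List Bool) (h : t <:+ babaW) (hne : t ≠ []) : 1 ≤ t.count false := by
  obtain ⟨pre, hpre⟩ := h
  have h4 : pre.length + t.length = 4 := by
    have := congrArg List.length hpre
    simp only [List.length_append] at this
    simpa [babaW] using this
  have ht : t = babaW.drop pre.length := by rw [← hpre, List.drop_left]
  have h1 : 1 ≤ t.length := List.length_pos_iff.mpr hne
  rcases (show pre.length = 0 ∨ pre.length = 1 ∨ pre.length = 2 ∨ pre.length = 3 by omega)
    with h5 | h5 | h5 | h5 <;> rw [h5] at ht <;> rw [ht] <;> decide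

/-! ### the symmetry lemmas -/

lemma bb_00 (ξ) : bb ξ 0 0 = [] := by
  show basicBlock ξ (0, 0) = _
  simp only [basicBlock]

def dag (ξ : ℕ × ℕ → Bool) : ℕ × ℕ → Bool := fun p => ξ (p.2, p.1)

lemma bb_dag (ξ) : ∀ n x y, x + y = n → bb (dag ξ) y x = ((bb ξ x y).map not).reverse := by
  intro n
  induction n using Nat.strong_induction_on with
  | _ n IH =>
  intro x y hs
  rcases Nat.eq_zero_or_pos x with hx | hx
  · subst hx
    rcases Nat.eq_zero_or_pos y with hy | hy
    · subst hy; rw [bb_00, bb_00]; rfl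
    · rw [bb_x0 (dag ξ) y hy, bb_0y ξ y hy]; rfl
  rcases Nat.eq_zero_or_pos y with hy | hy
  · subst hy; rw [bb_0y (dag ξ) x hx, bb_x0 ξ x hx]; rfl
  rw [bb_step (dag ξ) y x hy hx, bb_step ξ x y hx hy]
  have hd : dag ξ (y, x) = ξ (x, y) := rfl
  rw [hd]
  have IH1 : bb (dag ξ) (y-1) x = ((bb ξ x (y-1)).map not).reverse :=
    IH (x + (y-1)) (by omega) x (y-1) rfl
  have IH2 : bb (dag ξ) y (x-1) = ((bb ξ (x-1) y).map not).reverse :=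
    IH ((x-1) + y) (by omega) (x-1) y rfl
  cases hxi : ξ (x, y) <;>
    simp [IH1, IH2, List.map_append, List.reverse_append]

def sneg (ξ : ℕ × ℕ → Bool) : ℕ × ℕ → Bool := fun p => !ξ (p.2, p.1)

lemma bb_sneg (ξ) : ∀ n x y, x + y = n → bb (sneg ξ) y x = (bb ξ x y).map not := by
  intro n
  induction n using Nat.strong_induction_on with
  | _ n IH =>
  intro x y hs
  rcases Nat.eq_zero_or_pos x with hx | hx
  · subst hx
    rcases Nat.eq_zero_or_pos y with hy | hy
    · subst hy; rw [bb_00, bb_00]; rfl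
    · rw [bb_x0 (sneg ξ) y hy, bb_0y ξ y hy]; rfl
  rcases Nat.eq_zero_or_pos y with hy | hy
  · subst hy; rw [bb_0y (sneg ξ) x hx, bb_x0 ξ x hx]; rfl
  rw [bb_step (sneg ξ) y x hy hx, bb_step ξ x y hx hy]
  have hd : sneg ξ (y, x) = !ξ (x, y) := rfl
  rw [hd]
  have IH1 : bb (sneg ξ) (y-1) x = (bb ξ x (y-1)).map not :=
    IH (x + (y-1)) (by omega) x (y-1) rfl
  have IH2 : bb (sneg ξ) y (x-1) = (bb ξ (x-1) y).map not :=
    IH ((x-1) + y) (by omega) (x-1) y rfl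
  cases hxi : ξ (x, y) <;>
    simp [IH1, IH2, List.map_append]

/-! ### the master lemma -/

theorem master : ∀ (n : ℕ) (ξ : ℕ × ℕ → Bool), ξ (2,2) = false → ∀ x y : ℕ, x + y = n →
    1 ≤ n →
    ¬ (babaW <+: bb ξ x y) ∧ ¬ (p10W <+: bb ξ x y) ∧ ¬ (p18W <:+: bb ξ x y) := by
  intro n
  induction n using Nat.strong_induction_on with
  | _ n IH =>
  intro ξ hξ x y hsum hn
  rcases Nat.eq_zero_or_pos y with hy0 | hy1
  · subst hy0
    rw [bb_x0 ξ x (by omega)]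
    refine ⟨fun h => ?_, fun h => ?_, fun h => ?_⟩
    · have := h.length_le; simp [babaW] at this
    · have := h.length_le; simp [p10W] at this
    · have := h.length_le; simp [p18W] at this
  rcases Nat.eq_zero_or_pos x with hx0 | hx1
  · subst hx0
    rw [bb_0y ξ y (by omega)]
    refine ⟨fun h => ?_, fun h => ?_, fun h => ?_⟩
    · have := h.length_le; simp [babaW] at this
    · have := h.length_le; simp [p10W] at this
    · have := h.length_le; simp [p18W] at this
  rcases (show x = 1 ∨ 2 ≤ x by omega) with hx1' | hx2
  · subst hx1'
    have hc := cf_col ξ y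
    refine ⟨fun h => ?_, fun h => ?_, fun h => ?_⟩
    · have h2 := h.sublist.count_le false
      have e : babaW.count false = 2 := by decide
      omega
    · have h2 := h.sublist.count_le false
      have e : p10W.count false = 5 := by decide
      omega
    · have h2 := h.sublist.count_le false
      have e : p18W.count false = 9 := by decide
      omega
  rcases (show y = 1 ∨ 2 ≤ y by omega) with hy1' | hy2
  · subst hy1'
    have hc := ct_row ξ x
    refine ⟨fun h => ?_, fun h => ?_, fun h => ?_⟩
    · have h2 := h.sublist.count_le true
      have e : babaW.count true = 2 := by decide
      omega
    · have h2 := h.sublist.count_le true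
      have e : p10W.count true = 5 := by decide
      omega
    · have h2 := h.sublist.count_le true
      have e : p18W.count true = 9 := by decide
      omega
  -- main case : x ≥ 2, y ≥ 2
  have hstep := bb_step ξ x y (by omega) (by omega)
  have IHL := IH (x + (y-1)) (by omega) ξ hξ x (y-1) rfl (by omega)
  have IHR := IH ((x-1) + y) (by omega) ξ hξ (x-1) y rfl (by omega)
  have hdξ : dag ξ (2,2) = false := hξ
  have hdagL := bb_dag ξ (x + (y-1)) x (y-1) rfl
  have hdagR := bb_dag ξ ((x-1) + y) (x-1) y rfl
  have IHdL := IH (x + (y-1)) (by omega) (dag ξ) hdξ (y-1) x (by omega) (by omega)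
  have IHdR := IH ((x-1) + y) (by omega) (dag ξ) hdξ y (x-1) (by omega) (by omega)
  have h2L : ¬ babaW <:+ bb ξ x (y-1) := by
    intro hsf
    have h1 : (babaW.map not).reverse <+: ((bb ξ x (y-1)).map not).reverse :=
      List.reverse_prefix.mpr (List.IsSuffix.map not hsf)
    rw [← hdagL, (by decide : (babaW.map not).reverse = babaW)] at h1
    exact IHdL.1 h1
  have h4L : ¬ p10W <:+ bb ξ x (y-1) := by
    intro hsf
    have h1 : (p10W.map not).reverse <+: ((bb ξ x (y-1)).map not).reverse :=
      List.reverse_prefix.mpr (List.IsSuffix.map not hsf)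
    rw [← hdagL, (by decide : (p10W.map not).reverse = p10W)] at h1
    exact IHdL.2.1 h1
  have h2R : ¬ babaW <:+ bb ξ (x-1) y := by
    intro hsf
    have h1 : (babaW.map not).reverse <+: ((bb ξ (x-1) y).map not).reverse :=
      List.reverse_prefix.mpr (List.IsSuffix.map not hsf)
    rw [← hdagR, (by decide : (babaW.map not).reverse = babaW)] at h1
    exact IHdR.1 h1
  have h4R : ¬ p10W <:+ bb ξ (x-1) y := by
    intro hsf
    have h1 : (p10W.map not).reverse <+: ((bb ξ (x-1) y).map not).reverse :=
      List.reverse_prefix.mpr (List.IsSuffix.map not hsf)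
    rw [← hdagR, (by decide : (p10W.map not).reverse = p10W)] at h1
    exact IHdR.2.1 h1
  have hcfL : x ≤ (bb ξ x (y-1)).count false := cf_ge ξ x (y-1) (by omega)
  have hcfR : x - 1 ≤ (bb ξ (x-1) y).count false := cf_ge ξ (x-1) y (by omega)
  have hctR : y ≤ (bb ξ (x-1) y).count true := ct_ge ξ y (x-1) (by omega)
  refine ⟨fun h => ?_, fun h => ?_, fun h => ?_⟩
  -- NG1 : no baba prefix
  · cases hxi : ξ (x, y)
    · have hw : bb ξ x y = bb ξ x (y-1) ++ bb ξ (x-1) y := by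
        rw [hstep, hxi, if_neg (by simp)]
      rcases prefix_split babaW _ _ (hw ▸ h) with h1 | ⟨t', ht', htv⟩
      · exact IHL.1 h1
      · by_cases hte : t' = []
        · subst hte
          rw [List.append_nil] at ht'
          exact IHL.1 (by rw [← ht'])
        · have hc1 : 1 ≤ t'.count false := suffix_baba_count t' ⟨_, ht'.symm⟩ hte
          have hc2 := congrArg (List.count false) ht'
          rw [List.count_append] at hc2
          have e : babaW.count false = 2 := by decide
          omega
    · have hw : bb ξ x y = bb ξ (x-1) y ++ bb ξ x (y-1) := by
        rw [hstep, hxi, if_pos rfl]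
      rcases prefix_split babaW _ _ (hw ▸ h) with h1 | ⟨t', ht', htv⟩
      · exact IHR.1 h1
      · by_cases hte : t' = []
        · subst hte
          rw [List.append_nil] at ht'
          exact IHR.1 (by rw [← ht'])
        · have hc1 : 1 ≤ t'.count false := suffix_baba_count t' ⟨_, ht'.symm⟩ hte
          have hc2 := congrArg (List.count false) ht'
          have hc3 := congrArg (List.count true) ht'
          rw [List.count_append] at hc2 hc3
          have e : babaW.count false = 2 := by decide
          have e' : babaW.count true = 2 := by decide
          have hx2' : x = 2 := by omega
          have hy2' : y = 2 := by omega
          rw [hx2', hy2'] at hxi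
          simp [hxi] at hξ
  -- NG3 : no (ab)^5 prefix
  · cases hxi : ξ (x, y)
    · have hw : bb ξ x y = bb ξ x (y-1) ++ bb ξ (x-1) y := by
        rw [hstep, hxi, if_neg (by simp)]
      rcases prefix_split p10W _ _ (hw ▸ h) with h1 | ⟨t', ht', htv⟩
      · exact IHL.2.1 h1
      · have hAlt : isAlt (bb ξ x (y-1)) = true := isAlt_prefix ⟨t', ht'.symm⟩ (by decide)
        have hxle : x ≤ 2 := by
          by_contra hh
          exact notAlt_x ξ (x + (y-1)) x (y-1) rfl (by omega) (by omega) hAlt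
        have hyle : y - 1 ≤ 2 := by
          by_contra hh
          exact notAlt_y ξ (x + (y-1)) x (y-1) rfl (by omega) (by omega) hAlt
        have hcsum := congrArg (List.count false) ht'
        rw [List.count_append] at hcsum
        have e : p10W.count false = 5 := by decide
        have htv' : t'.count false ≤ (bb ξ (x-1) y).count false := htv.sublist.count_le false
        have hx2' : x = 2 := by omega
        rcases (show y = 2 ∨ y = 3 by omega) with hy2' | hy3'
        · subst hx2'; subst hy2'
          have hLc : (bb ξ 2 (2-1)).count false = 2 := cf_row ξ 2
          have hRc : (bb ξ (2-1) 2).count false = 1 := cf_col ξ 2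
          omega
        · subst hx2'; subst hy3'
          have hL22 : bb ξ 2 (3-1) = bb ξ 2 1 ++ bb ξ 1 2 := by
            rw [(by norm_num : (3:ℕ) - 1 = 2), bb_step ξ 2 2 (by omega) (by omega), hξ,
              if_neg (by simp)]
          have hLc : (bb ξ 2 (3-1)).count false = 3 := by
            rw [hL22, List.count_append, cf_row ξ 2, cf_col ξ 2]
          have hRc : (bb ξ (2-1) 3).count false = 1 := cf_col ξ 3
          omega
    · have hw : bb ξ x y = bb ξ (x-1) y ++ bb ξ x (y-1) := by
        rw [hstep, hxi, if_pos rfl]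
      rcases prefix_split p10W _ _ (hw ▸ h) with h1 | ⟨t', ht', htv⟩
      · exact IHR.2.1 h1
      · have hAlt : isAlt (bb ξ (x-1) y) = true := isAlt_prefix ⟨t', ht'.symm⟩ (by decide)
        have hxle : x - 1 ≤ 2 := by
          by_contra hh
          exact notAlt_x ξ ((x-1) + y) (x-1) y rfl (by omega) (by omega) hAlt
        have hyle : y ≤ 2 := by
          by_contra hh
          exact notAlt_y ξ ((x-1) + y) (x-1) y rfl (by omega) (by omega) hAlt
        have hy2' : y = 2 := by omega
        rcases (show x = 2 ∨ x = 3 by omega) with hx2' | hx3'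
        · rw [hx2', hy2'] at hxi
          simp [hxi] at hξ
        · subst hx3'; subst hy2'
          have hcsum := congrArg (List.count true) ht'
          rw [List.count_append] at hcsum
          have e : p10W.count true = 5 := by decide
          have htv' : t'.count true ≤ (bb ξ 3 (2-1)).count true := htv.sublist.count_le true
          have hL22 : bb ξ (3-1) 2 = bb ξ 2 1 ++ bb ξ 1 2 := by
            rw [(by norm_num : (3:ℕ) - 1 = 2), bb_step ξ 2 2 (by omega) (by omega), hξ,
              if_neg (by simp)]
          have hRc : (bb ξ (3-1) 2).count true = 3 := by
            rw [hL22, List.count_append, ct_row ξ 2, ct_col ξ 2]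
          have hLc : (bb ξ 3 (2-1)).count true = 1 := ct_row ξ 3
          omega
  -- NG5 : no (ab)^9 factor
  · cases hxi : ξ (x, y)
    · have hw : bb ξ x y = bb ξ x (y-1) ++ bb ξ (x-1) y := by
        rw [hstep, hxi, if_neg (by simp)]
      rcases infix_split p18W _ _ (hw ▸ h) with h1 | h1 | ⟨s, p, hsp, hsne, hpne, hsu, hpv⟩
      · exact IHL.2.2 h1
      · exact IHR.2.2 h1
      · have hsl : s = p18W.take s.length := by rw [← hsp, List.take_left]
        have hpl : p = p18W.drop s.length := by rw [← hsp, List.drop_left]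
        have hlen : s.length + p.length = 18 := by
          have h5 := congrArg List.length hsp
          rw [List.length_append] at h5
          simpa [p18W] using h5
        have h1s : 1 ≤ s.length := List.length_pos_iff.mpr hsne
        have h2s : s.length ≤ 17 := by
          have : 1 ≤ p.length := List.length_pos_iff.mpr hpne
          omega
        rw [hsl] at hsu
        rw [hpl] at hpv
        set k := s.length with hk
        clear_value k
        clear hsl hpl hsp hsne hpne hlen hk
        interval_cases k <;>
          first
          | exact IHR.1 (List.IsPrefix.trans (by decide) hpv)
          | exact IHR.2.1 (List.IsPrefix.trans (by decide) hpv)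
          | exact h2L (List.IsSuffix.trans (by decide) hsu)
          | exact h4L (List.IsSuffix.trans (by decide) hsu)
    · have hw : bb ξ x y = bb ξ (x-1) y ++ bb ξ x (y-1) := by
        rw [hstep, hxi, if_pos rfl]
      rcases infix_split p18W _ _ (hw ▸ h) with h1 | h1 | ⟨s, p, hsp, hsne, hpne, hsu, hpv⟩
      · exact IHR.2.2 h1
      · exact IHL.2.2 h1
      · have hsl : s = p18W.take s.length := by rw [← hsp, List.take_left]
        have hpl : p = p18W.drop s.length := by rw [← hsp, List.drop_left]
        have hlen : s.length + p.length = 18 := by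
          have h5 := congrArg List.length hsp
          rw [List.length_append] at h5
          simpa [p18W] using h5
        have h1s : 1 ≤ s.length := List.length_pos_iff.mpr hsne
        have h2s : s.length ≤ 17 := by
          have : 1 ≤ p.length := List.length_pos_iff.mpr hpne
          omega
        rw [hsl] at hsu
        rw [hpl] at hpv
        set k := s.length with hk
        clear_value k
        clear hsl hpl hsp hsne hpne hlen hk
        interval_cases k <;>
          first
          | exact IHL.1 (List.IsPrefix.trans (by decide) hpv)
          | exact IHL.2.1 (List.IsPrefix.trans (by decide) hpv)
          | exact h2R (List.IsSuffix.trans (by decide) hsu)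
          | exact h4R (List.IsSuffix.trans (by decide) hsu)

end S14

theorem stmt14 (ξ : ℕ × ℕ → Bool) (x y : ℕ) (h : 1 ≤ x + y) :
    ¬ ((List.replicate 9 [false, true]).flatten <:+: basicBlock ξ (x, y) ∧
       (List.replicate 9 [true, false]).flatten <:+: basicBlock ξ (x, y)) := by
  rintro ⟨hab, hba⟩
  have e1 : (List.replicate 9 [false, true]).flatten = S14.p18W := by decide
  rw [e1] at hab
  cases hξ : ξ (2, 2)
  · exact (S14.master (x+y) ξ hξ x y rfl h).2.2 hab
  · have hξ' : S14.sneg ξ (2,2) = false := by simp [S14.sneg, hξ]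
    have hmap := List.IsInfix.map not hba
    rw [← S14.bb_sneg ξ (x+y) x y rfl] at hmap
    have e2 : ((List.replicate 9 [true, false]).flatten).map not = S14.p18W := by decide
    rw [e2] at hmap
    exact (S14.master (y+x) (S14.sneg ξ) hξ' y x rfl (by omega)).2.2 hmap
end

section
/- The only σ-periodic points of the big subshift Σ are the two constant sequences a^∞ and b^∞: if ω ∈ Σ and σ^p ω = ω for some p ≥ 1, then ω is constant. -/
/-!
Let `ω` be `p`-periodic and not constant, with `q` letters `b` per period, so `0 < q < p`, and put
`n = 2p² + 1`. A window of `ω` of length `2 · 2ⁿ + 1` lies in some basic block, hence in one at a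
vertex `(x, y)` with `x, y > 0` and `x + y ≥ n`. Such a block is a concatenation of blocks `B(u)`
with `u` on the line `x = 1`, the line `y = 1` or the antidiagonal `x + y = n`, so the window
contains one of them or a subword of length `> 2ⁿ` of one of them. Both are impossible. `B(1, y)`
and `B(x, 1)` contain a single `a`, resp. `b`, whereas every word of length `≥ 2p` occurring in `ω`
contains each letter twice. The other blocks `B(i, j)` have a length `ℓ` between
`C(n, 2) = n p²` and `2ⁿ` and contain exactly `ℓ j / n` letters `b`, whereas a word of length `ℓ`
occurring in `ω` contains `ℓ q / p` of them up to an error of `q`. As `n ≡ 1 (mod p)`,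
`j / n ≠ q / p`, and then `ℓ · |j / n - q / p| ≥ ℓ / (n p) ≥ p > q`.
-/

open Function List

section Window

variable {α : Type*}

def window (ω : ℤ → α) (c : ℤ) (L : ℕ) : List α := (List.range L).map fun u : ℕ => ω (c + u)

@[simp]
theorem length_window (ω : ℤ → α) (c : ℤ) (L : ℕ) : (window ω c L).length = L := by
  simp [window]

theorem window_add (ω : ℤ → α) (c : ℤ) (L₁ L₂ : ℕ) :
    window ω c (L₁ + L₂) = window ω c L₁ ++ window ω (c + L₁) L₂ := by
  simp only [window, List.range_add, List.map_append, List.map_map]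
  congr 1
  refine List.map_congr_left fun u _ => ?_
  simp [add_assoc]

theorem window_one (ω : ℤ → α) (c : ℤ) : window ω c 1 = [ω c] := by
  simp [window]

def OccursIn (w : List α) (ω : ℤ → α) : Prop := ∃ c, w = window ω c w.length

theorem occursIn_window (ω : ℤ → α) (c : ℤ) (L : ℕ) : OccursIn (window ω c L) ω :=
  ⟨c, by simp⟩

theorem OccursIn.of_infix {w v : List α} {ω : ℤ → α} (hv : OccursIn v ω) (h : w <:+: v) :
    OccursIn w ω := by
  obtain ⟨s, t, rfl⟩ := h
  obtain ⟨c, hc⟩ := hv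
  rw [length_append, length_append, window_add, window_add] at hc
  obtain ⟨hsw, -⟩ := List.append_inj hc (by simp)
  exact ⟨c + s.length, (List.append_inj hsw (by simp)).2⟩

variable [BEq α] {ω : ℤ → α} {p : ℕ}

theorem count_window_add (b : α) (c : ℤ) (L₁ L₂ : ℕ) :
    (window ω c (L₁ + L₂)).count b = (window ω c L₁).count b + (window ω (c + L₁) L₂).count b := by
  rw [window_add, count_append]

theorem count_window_mono (b : α) (c : ℤ) {L₁ L₂ : ℕ} (h : L₁ ≤ L₂) :
    (window ω c L₁).count b ≤ (window ω c L₂).count b := by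
  obtain ⟨d, rfl⟩ := Nat.exists_eq_add_of_le h
  rw [count_window_add]
  omega

theorem Function.Periodic.count_window_eq (hω : Periodic ω p) (b : α) (c : ℤ) :
    (window ω c p).count b = (window ω 0 p).count b := by
  have step (c : ℤ) : (window ω (c + 1) p).count b = (window ω c p).count b := by
    have h := window_add ω c 1 p
    rw [add_comm 1 p, window_add, window_one, window_one, hω c] at h
    have := congrArg (count b) h
    simp only [count_append, Nat.cast_one] at this
    omega
  induction c using Int.induction_on with
  | zero => rfl
  | succ k ih => rw [step, ih]
  | pred k ih => rw [← step, sub_add_cancel, ih]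

theorem Function.Periodic.count_window_mul (hω : Periodic ω p) (b : α) (c : ℤ) (k : ℕ) :
    (window ω c (k * p)).count b = k * (window ω 0 p).count b := by
  induction k generalizing c with
  | zero => simp [window]
  | succ k ih => rw [Nat.succ_mul, count_window_add, ih, hω.count_window_eq b (c + _), Nat.succ_mul]

theorem Function.Periodic.div_mul_count_le (hω : Periodic ω p) (b : α) (c : ℤ) (L : ℕ) :
    L / p * (window ω 0 p).count b ≤ (window ω c L).count b :=
  hω.count_window_mul b c (L / p) ▸ count_window_mono b c (Nat.div_mul_le_self L p)

theorem Function.Periodic.count_window_le (hω : Periodic ω p) (hp : 0 < p) (b : α) (c : ℤ)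
    (L : ℕ) : (window ω c L).count b ≤ (L / p + 1) * (window ω 0 p).count b :=
  hω.count_window_mul b c (L / p + 1) ▸ count_window_mono b c
    (by rw [Nat.succ_mul]; exact (Nat.lt_div_mul_add hp).le)

theorem Function.Periodic.abs_mul_count_window_sub_le (hω : Periodic ω p) (hp : 0 < p) (b : α)
    (c : ℤ) (L : ℕ) :
    |(p : ℤ) * (window ω c L).count b - L * (window ω 0 p).count b|
      ≤ p * (window ω 0 p).count b := by
  have hlo := hω.div_mul_count_le b c L
  have hhi := hω.count_window_le hp b c L
  have hL := Nat.div_add_mod' L p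
  have hr := Nat.mod_lt L hp
  generalize (window ω c L).count b = T at *
  generalize (window ω 0 p).count b = q at *
  generalize L / p = A at *
  generalize L % p = r at *
  subst hL
  rw [abs_le]
  push_cast
  constructor <;> nlinarith

theorem Function.Periodic.count_window_pos [LawfulBEq α] (hω : Periodic ω p) (hp : 0 < p)
    (c : ℤ) : 0 < (window ω 0 p).count (ω c) := by
  rw [← hω.count_window_eq (ω c) c, count_pos_iff]
  exact mem_map.2 ⟨0, mem_range.2 hp, by simp⟩

end Window

theorem List.exists_infix_of_infix_flatten {α : Type*} {w : List α} {L : List (List α)}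
    (hw : w ≠ []) (h : w <:+: L.flatten) :
    (∃ u ∈ L, u <:+: w) ∨ ∃ s t, w = s ++ t ∧ (∃ u ∈ L, s <:+: u) ∧ ∃ v ∈ L, t <:+: v := by
  induction L with
  | nil => exact absurd (eq_nil_of_infix_nil h) hw
  | cons u L ih =>
    rw [flatten_cons, infix_append_iff] at h
    rcases h with h | h | ⟨s, t, rfl, hs, ht⟩
    · exact .inr ⟨w, [], by simp, ⟨u, mem_cons_self, h⟩, u, mem_cons_self, nil_infix⟩
    · rcases ih h with ⟨v, hv, hvw⟩ | ⟨s, t, hst, ⟨v, hv, hs⟩, v', hv', ht⟩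
      · exact .inl ⟨v, mem_cons_of_mem _ hv, hvw⟩
      · exact .inr ⟨s, t, hst, ⟨v, mem_cons_of_mem _ hv, hs⟩, v', mem_cons_of_mem _ hv', ht⟩
    · cases L with
      | nil =>
        obtain rfl := prefix_nil.1 ht
        exact .inr ⟨s, [], rfl, ⟨u, mem_cons_self, hs.isInfix⟩, u, mem_cons_self, nil_infix⟩
      | cons v L =>
        rcases prefix_or_prefix_of_prefix ht (prefix_append v L.flatten) with h | h
        · exact .inr ⟨s, t, rfl, ⟨u, mem_cons_self, hs.isInfix⟩, v, by simp, h.isInfix⟩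
        · exact .inl ⟨v, by simp, h.isInfix.trans infix_append_right⟩

theorem Nat.choose_le_choose_of_le_of_add_le {m j k : ℕ} (hjk : j ≤ k) (hkm : k + j ≤ m) :
    m.choose j ≤ m.choose k := by
  wlog hk : k ≤ m / 2 generalizing k
  · rw [← Nat.choose_symm (k := k) (by omega)]
    exact this (k := m - k) (by omega) (by omega) (by omega)
  revert hkm hk
  induction k, hjk using Nat.le_induction with
  | base => intros; rfl
  | succ k hjk ih =>
    intro hkm hk
    exact (ih (by omega) (by omega)).trans (Nat.choose_le_succ_of_lt_half_left (by omega))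

section BasicBlock

variable (ξ : ℕ × ℕ → Bool)

theorem basicBlock_succ_succ_perm (x y : ℕ) :
    basicBlock ξ (x + 1, y + 1) ~ basicBlock ξ (x, y + 1) ++ basicBlock ξ (x + 1, y) := by
  rw [basicBlock]
  split
  · rfl
  · exact perm_append_comm

theorem count_true_basicBlock (x y : ℕ) :
    (basicBlock ξ (x, y + 1)).count true = (x + y).choose x := by
  induction x generalizing y with
  | zero => simp [basicBlock]
  | succ x ih =>
    induction y with
    | zero => rw [(basicBlock_succ_succ_perm ξ x 0).count_eq, count_append, ih]; simp [basicBlock]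
    | succ y ihy =>
      rw [(basicBlock_succ_succ_perm ξ x (y + 1)).count_eq, count_append, ih, ihy,
        show x + 1 + (y + 1) = x + y + 1 + 1 by ring, Nat.choose_succ_succ']
      ring_nf

theorem count_false_basicBlock (x y : ℕ) :
    (basicBlock ξ (x + 1, y)).count false = (x + y).choose y := by
  induction y generalizing x with
  | zero => simp [basicBlock]
  | succ y ih =>
    induction x with
    | zero => rw [(basicBlock_succ_succ_perm ξ 0 y).count_eq, count_append, ih]; simp [basicBlock]
    | succ x ihx =>
      rw [(basicBlock_succ_succ_perm ξ (x + 1) y).count_eq, count_append, ih, ihx,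
        show x + 1 + (y + 1) = x + y + 1 + 1 by ring, Nat.choose_succ_succ']
      ring_nf

theorem length_basicBlock {x y : ℕ} (hx : 0 < x) (hy : 0 < y) :
    (basicBlock ξ (x, y)).length = (x + y).choose x := by
  obtain ⟨x, rfl⟩ := Nat.exists_eq_add_one.2 hx
  obtain ⟨y, rfl⟩ := Nat.exists_eq_add_one.2 hy
  rw [← count_true_add_count_false, count_true_basicBlock, count_false_basicBlock,
    show x + 1 + (y + 1) = x + y + 1 + 1 by ring, Nat.choose_succ_succ',
    ← Nat.choose_symm_add]
  ring_nf

theorem mul_count_true_basicBlock {x y : ℕ} (hx : 0 < x) (hy : 0 < y) :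
    (x + y) * (basicBlock ξ (x, y)).count true = y * (basicBlock ξ (x, y)).length := by
  obtain ⟨y, rfl⟩ := Nat.exists_eq_add_one.2 hy
  have := Nat.choose_mul_succ_eq (x + y) x
  rw [count_true_basicBlock, length_basicBlock ξ hx (Nat.succ_pos y),
    show x + y + 1 - x = y + 1 by omega] at *
  rw [show x + (y + 1) = x + y + 1 by ring]
  linarith

theorem basicBlock_children_infix (x y : ℕ) :
    basicBlock ξ (x, y + 1) <:+: basicBlock ξ (x + 1, y + 1) ∧
      basicBlock ξ (x + 1, y) <:+: basicBlock ξ (x + 1, y + 1) := by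
  rw [basicBlock]
  split <;> simp [infix_append_left, infix_append_right]

theorem basicBlock_infix_add_one (x y : ℕ) :
    basicBlock ξ (x, y) <:+: basicBlock ξ (x + 1, y + 1) := by
  refine IsInfix.trans ?_ (basicBlock_children_infix ξ x y).1
  cases x with
  | zero => cases y <;> simp [basicBlock]
  | succ x => exact (basicBlock_children_infix ξ x y).2

theorem basicBlock_infix_add (x y k : ℕ) :
    basicBlock ξ (x, y) <:+: basicBlock ξ (x + k, y + k) := by
  induction k with
  | zero => exact infix_rfl
  | succ k ih => exact ih.trans (basicBlock_infix_add_one ξ (x + k) (y + k))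

def IsFrontier (n : ℕ) (u : ℕ × ℕ) : Prop :=
  0 < u.1 ∧ 0 < u.2 ∧ n ≤ u.1 + u.2 ∧ (u.1 = 1 ∨ u.2 = 1 ∨ u.1 + u.2 = n)

theorem exists_flatten_eq_basicBlock (n : ℕ) {x y : ℕ} (hx : 0 < x) (hy : 0 < y)
    (hn : n ≤ x + y) : ∃ l : List (ℕ × ℕ), (∀ u ∈ l, IsFrontier n u) ∧
      (l.map (basicBlock ξ)).flatten = basicBlock ξ (x, y) := by
  induction h : x + y using Nat.strong_induction_on generalizing x y with
  | _ m ih =>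
    by_cases hu : IsFrontier n (x, y)
    · exact ⟨[(x, y)], by simpa using hu, by simp⟩
    obtain ⟨x, rfl⟩ := Nat.exists_eq_add_one.2 hx
    obtain ⟨y, rfl⟩ := Nat.exists_eq_add_one.2 hy
    simp only [IsFrontier] at hu
    obtain ⟨l₁, hl₁, e₁⟩ :=
      ih _ (by omega) (x := x) (y := y + 1) (by omega) (by omega) (by omega) rfl
    obtain ⟨l₂, hl₂, e₂⟩ :=
      ih _ (by omega) (x := x + 1) (y := y) (by omega) (by omega) (by omega) rfl
    rw [basicBlock]
    split
    · exact ⟨l₁ ++ l₂, by simp only [mem_append]; grind, by simp [e₁, e₂]⟩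
    · exact ⟨l₂ ++ l₁, by simp only [mem_append]; grind, by simp [e₁, e₂]⟩

end BasicBlock

section PeriodicPoint

variable {ω : ℤ → Bool} {p : ℕ}

theorem not_occursIn_of_count_le_one (hω : Periodic ω p) {b : Bool}
    (hb : 0 < (window ω 0 p).count b) {w : List Bool} (hlen : 2 * p ≤ w.length)
    (hw : w.count b ≤ 1) : ¬ OccursIn w ω := by
  rintro ⟨c, hc⟩
  have hp : 0 < p := Nat.pos_of_ne_zero (by rintro rfl; simp [window] at hb)
  have h2 : 2 ≤ w.length / p := (Nat.le_div_iff_mul_le hp).2 (by linarith)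
  have := hω.div_mul_count_le b c w.length
  rw [← hc] at this
  nlinarith

theorem not_occursIn_of_infix_basicBlock_of_eq_one (hω : Periodic ω p)
    (hq : ∀ b, 0 < (window ω 0 p).count b) {ξ : ℕ × ℕ → Bool} {u : ℕ × ℕ}
    (hu : u.1 = 1 ∨ u.2 = 1) {w : List Bool} (hw : w <:+: basicBlock ξ u)
    (hlen : 2 * p ≤ w.length) : ¬ OccursIn w ω := by
  obtain ⟨x, y⟩ := u
  rcases hu with rfl | rfl
  · refine not_occursIn_of_count_le_one hω (hq false) hlen ((hw.count_le false).trans ?_)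
    simpa using (count_false_basicBlock ξ 0 y).le
  · refine not_occursIn_of_count_le_one hω (hq true) hlen ((hw.count_le true).trans ?_)
    simpa using (count_true_basicBlock ξ x 0).le

theorem not_occursIn_basicBlock_of_add_eq (hω : Periodic ω p)
    (hq : ∀ b, 0 < (window ω 0 p).count b) (ξ : ℕ × ℕ → Bool) {i j : ℕ} (hi : 2 ≤ i)
    (hj : 2 ≤ j) (hn : i + j = 2 * p ^ 2 + 1) : ¬ OccursIn (basicBlock ξ (i, j)) ω := by
  rintro ⟨c, hc⟩
  set n := 2 * p ^ 2 + 1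
  set q := (window ω 0 p).count true
  have hp : 0 < p := Nat.pos_of_ne_zero (by rintro rfl; simpa [window] using hq true)
  have hqp : q < p := by
    have := count_true_add_count_false (window ω 0 p)
    have := hq false
    simp only [length_window] at *
    omega
  have hdev := hω.abs_mul_count_window_sub_le hp true c (basicBlock ξ (i, j)).length
  rw [← hc] at hdev
  have hfreq := mul_count_true_basicBlock ξ (by omega : 0 < i) (by omega : 0 < j)
  rw [hn] at hfreq
  have hlong : n * p ^ 2 ≤ (basicBlock ξ (i, j)).length := by
    rw [length_basicBlock ξ (by omega) (by omega), hn]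
    calc n * p ^ 2 = n.choose 2 := by
          rw [Nat.choose_two_right, show n - 1 = 2 * p ^ 2 by omega, Nat.mul_left_comm,
            Nat.mul_div_cancel_left _ two_pos]
      _ ≤ n.choose i := Nat.choose_le_choose_of_le_of_add_le hi (by omega)
  generalize (basicBlock ξ (i, j)).length = ℓ at *
  generalize (basicBlock ξ (i, j)).count true = T at *
  -- `n ≡ 1 (mod p)` while `0 < q < p`, so the frequencies `j / n` and `q / p` differ.
  have hgap : (p : ℤ) * j - n * q ≠ 0 := by
    intro h
    have : (p : ℤ) ∣ q := ⟨j - 2 * p * q, by push_cast [n] at h; linear_combination -h⟩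
    have := Int.le_of_dvd (by exact_mod_cast hq true) this
    omega
  have key : (n : ℤ) * (p * T - ℓ * q) = ℓ * (p * j - n * q) := by
    linear_combination (p : ℤ) * (by exact_mod_cast hfreq : (n : ℤ) * T = j * ℓ)
  have : (ℓ : ℤ) ≤ n * (p * q) :=
    calc (ℓ : ℤ) ≤ |(ℓ : ℤ) * (p * j - n * q)| := by
          rw [abs_mul, abs_of_nonneg (by positivity)]
          exact le_mul_of_one_le_right (by positivity) (Int.one_le_abs hgap)
      _ = n * |(p : ℤ) * T - ℓ * q| := by rw [← key, abs_mul, abs_of_nonneg (by positivity)]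
      _ ≤ n * (p * q) := by gcongr
  have : (n : ℤ) * (p * q) < n * p ^ 2 := by
    have : (q : ℤ) < p := by exact_mod_cast hqp
    have : (0 : ℤ) < n := by positivity
    nlinarith
  have : ((n * p ^ 2 : ℕ) : ℤ) ≤ ℓ := by exact_mod_cast hlong
  push_cast at this
  linarith

end PeriodicPoint

section Frontier

variable {ω : ℤ → Bool} {p : ℕ}

theorem IsFrontier.not_occursIn_basicBlock (hω : Periodic ω p)
    (hq : ∀ b, 0 < (window ω 0 p).count b) (ξ : ℕ × ℕ → Bool) {u : ℕ × ℕ}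
    (hu : IsFrontier (2 * p ^ 2 + 1) u) : ¬ OccursIn (basicBlock ξ u) ω := by
  obtain ⟨x, y⟩ := u
  obtain ⟨hx, hy, hn, hu⟩ := hu
  simp only at hx hy hn hu
  by_cases hxy : x = 1 ∨ y = 1
  · refine not_occursIn_of_infix_basicBlock_of_eq_one hω hq hxy infix_rfl ?_
    have := Nat.le_self_pow two_ne_zero p
    calc 2 * p ≤ x + y := by omega
      _ = (x + y).choose 1 := (Nat.choose_one_right _).symm
      _ ≤ (x + y).choose x := Nat.choose_le_choose_of_le_of_add_le hx (by omega)
      _ = _ := (length_basicBlock ξ hx hy).symm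
  · exact not_occursIn_basicBlock_of_add_eq hω hq ξ (by omega) (by omega) (by omega)

theorem IsFrontier.not_occursIn_of_infix (hω : Periodic ω p)
    (hq : ∀ b, 0 < (window ω 0 p).count b) {ξ : ℕ × ℕ → Bool} {u : ℕ × ℕ}
    (hu : IsFrontier (2 * p ^ 2 + 1) u) {w : List Bool} (hw : w <:+: basicBlock ξ u)
    (hlen : 2 ^ (2 * p ^ 2 + 1) < w.length) : ¬ OccursIn w ω := by
  obtain ⟨x, y⟩ := u
  obtain ⟨hx, hy, hn, hu⟩ := hu
  simp only at hx hy hn hu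
  by_cases hxy : x = 1 ∨ y = 1
  · refine not_occursIn_of_infix_basicBlock_of_eq_one hω hq hxy hw ?_
    have := Nat.lt_two_pow_self (n := 2 * p ^ 2 + 1)
    have := Nat.le_self_pow two_ne_zero p
    omega
  · have := hw.length_le
    rw [length_basicBlock ξ hx hy, show x + y = 2 * p ^ 2 + 1 by omega] at this
    have := Nat.choose_le_two_pow (2 * p ^ 2 + 1) x
    omega

theorem window_not_infix_basicBlock (hω : Periodic ω p) (hq : ∀ b, 0 < (window ω 0 p).count b)
    (ξ : ℕ × ℕ → Bool) {x y : ℕ} (hx : 0 < x) (hy : 0 < y) (hn : 2 * p ^ 2 + 1 ≤ x + y)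
    (c : ℤ) : ¬ window ω c (2 * 2 ^ (2 * p ^ 2 + 1) + 1) <:+: basicBlock ξ (x, y) := by
  intro hW
  obtain ⟨l, hl, hflat⟩ := exists_flatten_eq_basicBlock ξ _ hx hy hn
  rw [← hflat] at hW
  rcases exists_infix_of_infix_flatten (by simp [← length_pos_iff]) hW with
    ⟨_, hu, hsub⟩ | ⟨s, t, hst, ⟨_, hu, hs⟩, _, hv, ht⟩
  · obtain ⟨u, hul, rfl⟩ := mem_map.1 hu
    exact (hl u hul).not_occursIn_basicBlock hω hq ξ ((occursIn_window ω c _).of_infix hsub)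
  · obtain ⟨u, hul, rfl⟩ := mem_map.1 hu
    obtain ⟨v, hvl, rfl⟩ := mem_map.1 hv
    have hlen := congrArg length hst
    rw [length_window, length_append] at hlen
    rcases (show 2 ^ (2 * p ^ 2 + 1) < s.length ∨ 2 ^ (2 * p ^ 2 + 1) < t.length by omega)
      with h | h
    · exact (hl u hul).not_occursIn_of_infix hω hq hs h
        ((occursIn_window ω c _).of_infix (hst ▸ infix_append_left))
    · exact (hl v hvl).not_occursIn_of_infix hω hq ht h
        ((occursIn_window ω c _).of_infix (hst ▸ infix_append_right))

end Frontier

theorem stmt16 (ω : ℤ → Bool) (hω : ω ∈ BigShift) (p : ℕ) (hp : 1 ≤ p)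
    (hper : (fun t => ω (t + p)) = ω) : ∀ s t : ℤ, ω s = ω t := by
  by_contra hconst
  push Not at hconst
  obtain ⟨s, t, hst⟩ := hconst
  have hperiodic : Periodic ω p := congrFun hper
  have hq : ∀ b, 0 < (window ω 0 p).count b := by
    intro b
    obtain ⟨c, rfl⟩ : ∃ c, ω c = b := by
      have : ω s = b ∨ ω t = b := by
        cases b <;> cases hs : ω s <;> cases ht : ω t <;> simp_all
      exact this.elim (⟨s, ·⟩) (⟨t, ·⟩)
    exact hperiodic.count_window_pos hp c
  obtain ⟨ξ, ⟨x, y⟩, hW⟩ := hω 0 (2 * 2 ^ (2 * p ^ 2 + 1) + 1)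
  have hW' := hW.trans (basicBlock_infix_add ξ x y (2 * p ^ 2 + 1))
  refine window_not_infix_basicBlock hperiodic hq ξ (x := x + (2 * p ^ 2 + 1))
    (y := y + (2 * p ^ 2 + 1)) (by omega) (by omega) (by omega) 0 ?_
  convert hW' using 1
  simp [window, ← map_eq_flatMap]
end

section
/- There exists an ordering ξ of the Pascal graph for which the set X_{ξ,min} of infinite paths all of whose edges are ξ-minimal is uncountable; moreover, there exists an ordering ξ for which both X_{ξ,min} and X_{ξ,max} (the set of paths all of whose edges are ξ-maximal) are uncountable. -/
/-!
An ordering can be read off from the paths that are to be minimal or maximal: each of them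
dictates the order of the two edges into every vertex it enters, and these demands are consistent
as long as two such paths entering a common vertex never conflict.

For real `r`, let the path `cutPath r` move in `y` at even times and, at time `2k + 1`, move in `x`
iff the `k`-th rational is below `r`. Its set of `x`-moves grows with `r`, so two such paths at the
same vertex have the same `x`-moves so far and enter it by the same edge; the same holds for the
negated paths. A `cutPath` stays weakly above the diagonal and a negated one weakly below, so they
can only meet on the diagonal, entering it by different edges. Hence a single ordering makes the
continuum many `cutPath`s minimal and their negations maximal.
-/

lemma vertexAt_fst_add_snd (γ : ℕ → Bool) (n : ℕ) : (vertexAt γ n).1 + (vertexAt γ n).2 = n := by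
  have h := Finset.card_filter_add_card_filter_not (s := Finset.range n) (p := fun i => γ i = false)
  simpa only [vertexAt, Bool.not_eq_false, Finset.card_range] using h

lemma eq_of_vertexAt_eq {γ δ : ℕ → Bool} {m n : ℕ} (h : vertexAt γ m = vertexAt δ n) : m = n := by
  rw [← vertexAt_fst_add_snd γ m, ← vertexAt_fst_add_snd δ n, h]

lemma childOf_vertexAt (γ : ℕ → Bool) (n : ℕ) :
    childOf (vertexAt γ n) (γ n) = vertexAt γ (n + 1) := by
  simp only [vertexAt, childOf, Finset.range_add_one, Finset.filter_insert]
  cases h : γ n <;> simp [h, Finset.card_insert_of_notMem]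

lemma apply_eq_of_vertexAt_eq {γ δ : ℕ → Bool} {t : ℕ}
    (hsub : ∀ i < t, γ i = false → δ i = false) (hv : vertexAt γ t = vertexAt δ t)
    {i : ℕ} (hi : i < t) : γ i = δ i := by
  have hxmoves : (Finset.range t).filter (fun i => γ i = false)
      = (Finset.range t).filter (fun i => δ i = false) :=
    Finset.eq_of_subset_of_card_le
      (Finset.monotone_filter_right _ fun i hi => hsub i (Finset.mem_range.1 hi))
      (congrArg Prod.fst hv).ge
  have := congrArg (i ∈ ·) hxmoves
  simp only [Finset.mem_filter, Finset.mem_range, hi, true_and, eq_iff_iff] at this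
  cases hγ : γ i <;> cases hδ : δ i <;> simp_all

section CoherentOrdering

variable (A B : Set (ℕ → Bool))

open Classical in
/-- `ξ c = true` makes the `x`-edge into `c` minimal and the `y`-edge maximal. -/
noncomputable def coherentOrdering : ℕ × ℕ → Bool := fun c =>
  decide ((∃ γ ∈ A, ∃ n, vertexAt γ (n + 1) = c ∧ γ n = false) ∨
    ∃ δ ∈ B, ∃ n, vertexAt δ (n + 1) = c ∧ δ n = true)

variable {A B}
variable (hA : ∀ γ ∈ A, ∀ δ ∈ A, ∀ n, vertexAt γ (n + 1) = vertexAt δ (n + 1) → γ n = δ n)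
  (hB : ∀ γ ∈ B, ∀ δ ∈ B, ∀ n, vertexAt γ (n + 1) = vertexAt δ (n + 1) → γ n = δ n)
  (hAB : ∀ γ ∈ A, ∀ δ ∈ B, ∀ n, vertexAt γ (n + 1) = vertexAt δ (n + 1) → γ n ≠ δ n)
include hA hAB

lemma subset_XMin_coherentOrdering : A ⊆ XMin (coherentOrdering A B) := by
  intro γ hγ i
  refine Or.inr <| Or.inr ?_
  rw [childOf_vertexAt]
  cases hi : γ i
  · simpa [coherentOrdering] using Or.inl ⟨γ, hγ, i, rfl, hi⟩
  · rw [eq_comm, Bool.not_eq_true', coherentOrdering, decide_eq_false_iff_not, not_or]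
    constructor
    · rintro ⟨γ', hγ', n, hv, hn⟩
      obtain rfl := Nat.add_right_cancel (eq_of_vertexAt_eq hv)
      simp [hA γ' hγ' γ hγ n hv, hi] at hn
    · rintro ⟨δ, hδ, n, hv, hn⟩
      obtain rfl := Nat.add_right_cancel (eq_of_vertexAt_eq hv)
      exact hAB γ hγ δ hδ n hv.symm (hi.trans hn.symm)

omit hA
include hB

lemma subset_XMax_coherentOrdering : B ⊆ XMax (coherentOrdering A B) := by
  intro δ hδ i
  refine Or.inr <| Or.inr ?_
  rw [childOf_vertexAt]
  cases hi : δ i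
  · rw [eq_comm, coherentOrdering, decide_eq_false_iff_not, not_or]
    constructor
    · rintro ⟨γ, hγ, n, hv, hn⟩
      obtain rfl := Nat.add_right_cancel (eq_of_vertexAt_eq hv)
      exact hAB γ hγ δ hδ n hv (hn.trans hi.symm)
    · rintro ⟨δ', hδ', n, hv, hn⟩
      obtain rfl := Nat.add_right_cancel (eq_of_vertexAt_eq hv)
      simp [hB δ' hδ' δ hδ n hv, hi] at hn
  · simpa [coherentOrdering] using Or.inr ⟨δ, hδ, i, rfl, hi⟩

end CoherentOrdering

/-- The `x`-moves at odd times `2k + 1` record the Dedekind cut of `r` in an enumeration of `ℚ`. -/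
noncomputable def cutPath (r : ℝ) (n : ℕ) : Bool :=
  !decide (n % 2 = 1 ∧ ((Denumerable.ofNat ℚ (n / 2) : ℚ) : ℝ) < r)

lemma cutPath_eq_false_iff {r : ℝ} {n : ℕ} :
    cutPath r n = false ↔ n % 2 = 1 ∧ ((Denumerable.ofNat ℚ (n / 2) : ℚ) : ℝ) < r := by
  simp [cutPath]

lemma cutPath_injective : Function.Injective cutPath := by
  refine .of_lt_imp_ne fun r s hrs heq => ?_
  obtain ⟨q, hrq, hqs⟩ := exists_rat_btwn hrs
  obtain ⟨k, hk⟩ : ∃ k, Denumerable.ofNat ℚ k = q := (Denumerable.eqv ℚ).symm.surjective q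
  have hq : Denumerable.ofNat ℚ ((2 * k + 1) / 2) = q := by
    rw [show (2 * k + 1) / 2 = k by omega, hk]
  have key := congrArg (· = false) (congrFun heq (2 * k + 1))
  simp only [cutPath_eq_false_iff, hq, eq_iff_iff] at key
  exact (lt_asymm hrq) (key.2 ⟨by omega, hqs⟩).2

lemma not_cutPath_injective : Function.Injective fun r n => !cutPath r n :=
  fun _ _ h => cutPath_injective (funext fun n => Bool.not_inj (congrFun h n))

lemma cutPath_eq_false_of_le {r s : ℝ} (hrs : r ≤ s) {n : ℕ} (h : cutPath r n = false) :
    cutPath s n = false :=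
  cutPath_eq_false_iff.2 ⟨(cutPath_eq_false_iff.1 h).1, (cutPath_eq_false_iff.1 h).2.trans_le hrs⟩

lemma cutPath_apply_eq_of_vertexAt_eq (r s : ℝ) (n : ℕ)
    (hv : vertexAt (cutPath r) (n + 1) = vertexAt (cutPath s) (n + 1)) :
    cutPath r n = cutPath s n := by
  rcases le_total r s with hrs | hsr
  · exact apply_eq_of_vertexAt_eq (fun i _ => cutPath_eq_false_of_le hrs) hv n.lt_succ_self
  · exact (apply_eq_of_vertexAt_eq (fun i _ => cutPath_eq_false_of_le hsr) hv.symm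
      n.lt_succ_self).symm

lemma not_cutPath_apply_eq_of_vertexAt_eq (r s : ℝ) (n : ℕ)
    (hv : vertexAt (!cutPath r ·) (n + 1) = vertexAt (!cutPath s ·) (n + 1)) :
    (!cutPath r n) = !cutPath s n := by
  have mono {r s : ℝ} (hrs : r ≤ s) (i : ℕ) : (!cutPath s i) = false → (!cutPath r i) = false := by
    simpa only [Bool.not_eq_false', Bool.not_eq_true', Bool.not_eq_false] using
      mt (cutPath_eq_false_of_le hrs (n := i))
  rcases le_total r s with hrs | hsr
  · exact (apply_eq_of_vertexAt_eq (fun i _ => mono hrs i) hv.symm n.lt_succ_self).symm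
  · exact apply_eq_of_vertexAt_eq (fun i _ => mono hsr i) hv n.lt_succ_self

lemma card_filter_odd_le_card_filter_even (t : ℕ) :
    ((Finset.range t).filter (fun i => i % 2 = 1)).card
      ≤ ((Finset.range t).filter (fun i => i % 2 = 0)).card :=
  Finset.card_le_card_of_injOn (· - 1)
    (fun i hi => by
      simp only [Finset.coe_filter, Finset.mem_range, Set.mem_ofPred_eq] at hi ⊢
      omega)
    (fun i hi j hj h => by
      simp only [Finset.coe_filter, Set.mem_ofPred_eq] at hi hj h
      omega)

/-- A `cutPath` makes at most as many `x`-moves as there are odd times, a negated one at least as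
many as there are even times; at a common vertex both bounds are attained, so the first has moved
in `x` exactly at odd times and the second exactly at even times. -/
lemma cutPath_apply_ne_not_of_vertexAt_eq (r s : ℝ) (n : ℕ)
    (hv : vertexAt (cutPath r) (n + 1) = vertexAt (!cutPath s ·) (n + 1)) :
    cutPath r n ≠ !cutPath s n := by
  set odd := (Finset.range (n + 1)).filter (fun i => i % 2 = 1)
  set even := (Finset.range (n + 1)).filter (fun i => i % 2 = 0)
  set xMoves := (Finset.range (n + 1)).filter (fun i => cutPath r i = false)
  set xMoves' := (Finset.range (n + 1)).filter (fun i => (!cutPath s i) = false)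
  have hxMoves : xMoves ⊆ odd := Finset.monotone_filter_right _
    fun _ _ h => (cutPath_eq_false_iff.1 h).1
  have hxMoves' : even ⊆ xMoves' := Finset.monotone_filter_right _
    fun _ _ h => by simp [cutPath, h]
  have hcard : xMoves'.card = xMoves.card := (congrArg Prod.fst hv).symm
  have hodd : xMoves = odd := Finset.eq_of_subset_of_card_le hxMoves <|
    (card_filter_odd_le_card_filter_even _).trans <| (Finset.card_le_card hxMoves').trans hcard.le
  have heven : even = xMoves' := Finset.eq_of_subset_of_card_le hxMoves' <|
    hcard.le.trans <| (Finset.card_le_card hxMoves).trans (card_filter_odd_le_card_filter_even _)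
  have h1 := congrArg (n ∈ ·) hodd
  have h2 := congrArg (n ∈ ·) heven
  simp only [odd, even, xMoves, xMoves', Finset.mem_filter, Finset.self_mem_range_succ, true_and,
    eq_iff_iff] at h1 h2
  cases h : cutPath r n <;> cases h' : cutPath s n <;> simp_all

theorem stmt19 :
    (∃ ξ : ℕ × ℕ → Bool, ¬ (XMin ξ).Countable) ∧
    (∃ ξ : ℕ × ℕ → Bool, ¬ (XMin ξ).Countable ∧ ¬ (XMax ξ).Countable) := by
  set A := Set.range cutPath
  set B := Set.range fun r n => !cutPath r n
  have hA : ∀ γ ∈ A, ∀ δ ∈ A, ∀ n, vertexAt γ (n + 1) = vertexAt δ (n + 1) → γ n = δ n := by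
    rintro _ ⟨r, rfl⟩ _ ⟨s, rfl⟩
    exact cutPath_apply_eq_of_vertexAt_eq r s
  have hB : ∀ γ ∈ B, ∀ δ ∈ B, ∀ n, vertexAt γ (n + 1) = vertexAt δ (n + 1) → γ n = δ n := by
    rintro _ ⟨r, rfl⟩ _ ⟨s, rfl⟩
    exact not_cutPath_apply_eq_of_vertexAt_eq r s
  have hAB : ∀ γ ∈ A, ∀ δ ∈ B, ∀ n, vertexAt γ (n + 1) = vertexAt δ (n + 1) → γ n ≠ δ n := by
    rintro _ ⟨r, rfl⟩ _ ⟨s, rfl⟩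
    exact cutPath_apply_ne_not_of_vertexAt_eq r s
  have hmin : ¬ (XMin (coherentOrdering A B)).Countable := fun h =>
    Cardinal.not_countable_real <| (h.preimage cutPath_injective).mono
      fun r _ => subset_XMin_coherentOrdering hA hAB ⟨r, rfl⟩
  have hmax : ¬ (XMax (coherentOrdering A B)).Countable := fun h =>
    Cardinal.not_countable_real <| (h.preimage not_cutPath_injective).mono
      fun r _ => subset_XMax_coherentOrdering hB hAB ⟨r, rfl⟩
  exact ⟨⟨_, hmin⟩, _, hmin, hmax⟩
end
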